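/- (Theorem 3(b).) Under the hypotheses of Theorem 1 (closed-loop unicycle dynamics with controller ω = v/d + v·k₁·Ω(v·ē_x) + v·k₂·((r − d)/r)·η(r − d), v ≠ 0 constant, k₁, k₂ > 0, r(0) ∈ (r_i, r_o)), set Υ₁ = √(1 − exp(−2·V₁(0)/(d·k₂))) where V₁(0) = (1/2)(ē_x(0)² + ē_y(0)²) + d·k₂·V_r(r(0) − d). Then for all t ≥ 0: −δ_a·Υ₁ ≤ r(t) − d ≤ δ_b·Υ₁, and r_i + δ_a·(1 − Υ₁) ≤ r(t) ≤ r_o − δ_b·(1 − Υ₁). -/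

import Mathlib

/-- Range r(t) = √((x(t) − x_T)² + (y(t) − y_T)²). -/
noncomputable def rng (x y : ℝ → ℝ) (xT yT : ℝ) (t : ℝ) : ℝ :=
  Real.sqrt ((x t - xT) ^ 2 + (y t - yT) ^ 2)

/-- Transformed error ē_x(t) = (x(t) − x_T)·cos θ(t) + (y(t) − y_T)·sin θ(t). -/
noncomputable def ebx (x y θ : ℝ → ℝ) (xT yT : ℝ) (t : ℝ) : ℝ :=
  (x t - xT) * Real.cos (θ t) + (y t - yT) * Real.sin (θ t)

/-- Transformed error ē_y(t) = −(x(t) − x_T)·sin θ(t) + (y(t) − y_T)·cos θ(t) + d. -/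
noncomputable def eby (x y θ : ℝ → ℝ) (xT yT d : ℝ) (t : ℝ) : ℝ :=
  -(x t - xT) * Real.sin (θ t) + (y t - yT) * Real.cos (θ t) + d

/-- The asymmetric barrier Lyapunov function V_r. -/
noncomputable def Vr (δa δb e : ℝ) : ℝ :=
  if 0 < e then (1 / 2) * Real.log (δb ^ 2 / (δb ^ 2 - e ^ 2))
  else (1 / 2) * Real.log (δa ^ 2 / (δa ^ 2 - e ^ 2))

/-- η(e) = 1/(δ_b² − e²) for e > 0 and η(e) = 1/(δ_a² − e²) for e ≤ 0. -/
noncomputable def eta (δa δb e : ℝ) : ℝ :=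
  if 0 < e then 1 / (δb ^ 2 - e ^ 2) else 1 / (δa ^ 2 - e ^ 2)

/-!
Along the closed loop, as long as `r ∈ (r_i, r_o)`, the controller cancels the `θ̇`-terms in the
derivative of `V₁ = ½(ē_x² + ē_y²) + d k₂ V_r(r - d)`, leaving
`V̇₁ = -d k₁ (v ē_x) Ω(v ē_x) ≤ 0`. Hence `d k₂ V_r(r - d) ≤ V₁(0)`, and inverting the logarithmic
barrier gives `(r - d)² ≤ δ² (1 - exp(-2 V₁(0) / (d k₂)))` with `δ = δ_a` or `δ_b`, which is the
stated band. Since `Υ₁ < 1` this band is a closed subset of `(r_i, r_o)`, so at a first exit time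
from `(r_i, r_o)` the range would still lie in the band by continuity: there is no exit.
-/

open Real Set Topology

theorem forall_mem_of_forall_Icc_mem {X : Type*} [TopologicalSpace X] {r : ℝ → X} {K U : Set X}
    (hK : IsClosed K) (hU : IsOpen U) (hKU : K ⊆ U) (hr : ContinuousOn r (Ici 0))
    (h0 : r 0 ∈ U) (hinv : ∀ m ≥ (0 : ℝ), (∀ s ∈ Icc 0 m, r s ∈ U) → r m ∈ K) :
    ∀ t ≥ (0 : ℝ), r t ∈ K := by
  intro t ht
  by_contra hKt
  set F := Icc 0 t ∩ r ⁻¹' Uᶜ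
  have hF : IsClosed F :=
    (hr.mono Icc_subset_Ici_self).preimage_isClosed_of_isClosed isClosed_Icc hU.isClosed_compl
  have hFne : F.Nonempty := by
    by_contra hempty
    exact hKt (hinv t ht fun s hs => by_contra fun hsU => hempty ⟨s, hs, hsU⟩)
  have hFbdd : BddBelow F := ⟨0, fun s hs => hs.1.1⟩
  set τ := sInf F
  have hτF : τ ∈ F := hF.csInf_mem hFne hFbdd
  have hτpos : 0 < τ := lt_of_le_of_ne hτF.1.1 fun h => hτF.2 (h ▸ h0)
  have hbefore : ∀ s ∈ Ico 0 τ, r s ∈ U := fun s hs => by_contra fun hsU =>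
    (csInf_le hFbdd ⟨⟨hs.1, hs.2.le.trans hτF.1.2⟩, hsU⟩).not_gt hs.2
  have hmaps : MapsTo r (Ico 0 τ) K := fun s hs =>
    hinv s hs.1 fun u hu => hbefore u ⟨hu.1, hu.2.trans_lt hs.2⟩
  have hτK : r τ ∈ K := by
    have hcl : τ ∈ closure (Ico 0 τ) := by rw [closure_Ico hτpos.ne]; exact ⟨hτpos.le, le_rfl⟩
    simpa [hK.closure_eq] using
      ((hr τ hτpos.le).mono Ico_subset_Ici_self).mem_closure hcl hmaps
  exact hτF.2 (hKU hτK)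

noncomputable def logBarrier (δ e : ℝ) : ℝ := 1 / 2 * log (δ ^ 2 / (δ ^ 2 - e ^ 2))

lemma Vr_eq_ite (δa δb e : ℝ) :
    Vr δa δb e = if 0 < e then logBarrier δb e else logBarrier δa e := rfl

lemma logBarrier_zero {δ : ℝ} (hδ : δ ≠ 0) : logBarrier δ 0 = 0 := by
  simp [logBarrier, hδ]

lemma hasDerivAt_logBarrier {δ e : ℝ} (h : e ^ 2 < δ ^ 2) :
    HasDerivAt (logBarrier δ) (e * (1 / (δ ^ 2 - e ^ 2))) e := by
  have hden : δ ^ 2 - e ^ 2 ≠ 0 := by linarith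
  have hδ : δ ≠ 0 := by rintro rfl; nlinarith [sq_nonneg e]
  have hq : HasDerivAt (fun e => δ ^ 2 / (δ ^ 2 - e ^ 2))
      (δ ^ 2 * (2 * e) / (δ ^ 2 - e ^ 2) ^ 2) e := by
    refine ((hasDerivAt_const e (δ ^ 2)).div ((hasDerivAt_pow 2 e).const_sub (δ ^ 2))
      hden).congr_deriv ?_
    simp
  refine ((hq.log (div_ne_zero (pow_ne_zero 2 hδ) hden)).const_mul (1 / 2)).congr_deriv ?_
  field_simp

lemma sq_le_of_logBarrier_le {δ e c : ℝ} (h : e ^ 2 < δ ^ 2) (hc : logBarrier δ e ≤ c) :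
    e ^ 2 ≤ δ ^ 2 * (1 - exp (-(2 * c))) := by
  have hden : 0 < δ ^ 2 - e ^ 2 := by linarith
  have hlog : log (δ ^ 2 / (δ ^ 2 - e ^ 2)) ≤ 2 * c := by unfold logBarrier at hc; linarith
  rw [log_le_iff_le_exp (div_pos (by nlinarith [sq_nonneg e]) hden), div_le_iff₀ hden] at hlog
  have := mul_le_mul_of_nonneg_left hlog (exp_pos (-(2 * c))).le
  rw [← mul_assoc, ← exp_add, neg_add_cancel, exp_zero, one_mul] at this
  nlinarith

lemma hasDerivAt_Vr {δa δb e : ℝ} (ha : -δa < e) (hb : e < δb) :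
    HasDerivAt (Vr δa δb) (e * eta δa δb e) e := by
  rcases lt_trichotomy e 0 with he | rfl | he
  · have hVr : Vr δa δb =ᶠ[𝓝 e] logBarrier δa := by
      filter_upwards [Iio_mem_nhds he] with u hu
      rw [Vr_eq_ite, if_neg (not_lt.2 (le_of_lt hu))]
    rw [eta, if_neg (not_lt.2 he.le)]
    exact (hasDerivAt_logBarrier (by nlinarith)).congr_of_eventuallyEq hVr
  · -- the two branches of `Vr` meet at `0` with value `0` and slope `0`
    have ha0 : 0 < δa := by linarith
    have hb0 : 0 < δb := by linarith
    have hleft : HasDerivWithinAt (Vr δa δb) 0 (Iic 0) 0 := by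
      refine ((hasDerivAt_logBarrier (e := 0) (δ := δa) (by nlinarith)).hasDerivWithinAt.congr
        (fun u hu => ?_) ?_).congr_deriv (by simp)
      · rw [Vr_eq_ite, if_neg (not_lt.2 hu)]
      · rw [Vr_eq_ite, if_neg (lt_irrefl 0)]
    have hright : HasDerivWithinAt (Vr δa δb) 0 (Ioi 0) 0 := by
      refine ((hasDerivAt_logBarrier (e := 0) (δ := δb) (by nlinarith)).hasDerivWithinAt.congr
        (fun u hu => ?_) ?_).congr_deriv (by simp)
      · rw [Vr_eq_ite, if_pos (mem_Ioi.1 hu)]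
      · rw [Vr_eq_ite, if_neg (lt_irrefl 0), logBarrier_zero ha0.ne', logBarrier_zero hb0.ne']
    rw [zero_mul, ← hasDerivWithinAt_univ, ← Iic_union_Ici]
    exact hleft.union (hasDerivWithinAt_Ioi_iff_Ici.1 hright)
  · have hVr : Vr δa δb =ᶠ[𝓝 e] logBarrier δb := by
      filter_upwards [Ioi_mem_nhds he] with u hu
      rw [Vr_eq_ite, if_pos (mem_Ioi.1 hu)]
    rw [eta, if_pos he]
    exact (hasDerivAt_logBarrier (by nlinarith)).congr_of_eventuallyEq hVr

lemma abs_le_of_logBarrier_le {δ e c : ℝ} (hδ : 0 ≤ δ) (h : e ^ 2 < δ ^ 2)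
    (hc : logBarrier δ e ≤ c) : |e| ≤ δ * √(1 - exp (-(2 * c))) := by
  calc |e| ≤ √(δ ^ 2 * (1 - exp (-(2 * c)))) := abs_le_sqrt (sq_le_of_logBarrier_le h hc)
    _ = δ * √(1 - exp (-(2 * c))) := by rw [sqrt_mul (sq_nonneg δ), sqrt_sq hδ]

lemma mem_Icc_of_Vr_le {δa δb e c : ℝ} (ha : 0 ≤ δa) (hb : 0 ≤ δb) (he : e ∈ Ioo (-δa) δb)
    (hc : Vr δa δb e ≤ c) :
    e ∈ Icc (-δa * √(1 - exp (-(2 * c)))) (δb * √(1 - exp (-(2 * c)))) := by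
  have hs := sqrt_nonneg (1 - exp (-(2 * c)))
  rw [Vr_eq_ite] at hc
  split_ifs at hc with hpos
  · have := abs_le_of_logBarrier_le hb (by nlinarith [he.2]) hc
    exact ⟨by nlinarith, (le_abs_self e).trans this⟩
  · have := abs_le_of_logBarrier_le ha (by nlinarith [he.1, not_lt.1 hpos]) hc
    exact ⟨by linarith [neg_abs_le e], by nlinarith [not_lt.1 hpos]⟩

section Kinematics

variable {x y θ : ℝ → ℝ} {xT yT v t : ℝ}

lemma continuousAt_rng (hx : ContinuousAt x t) (hy : ContinuousAt y t) :
    ContinuousAt (rng x y xT yT) t := by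
  unfold rng; fun_prop

lemma sq_rng (t : ℝ) : rng x y xT yT t ^ 2 = (x t - xT) ^ 2 + (y t - yT) ^ 2 :=
  sq_sqrt (by positivity)

lemma hasDerivAt_rng (hx : HasDerivAt x (v * cos (θ t)) t) (hy : HasDerivAt y (v * sin (θ t)) t)
    (hr : rng x y xT yT t ≠ 0) :
    HasDerivAt (rng x y xT yT) (v * ebx x y θ xT yT t / rng x y xT yT t) t := by
  have hq := ((hx.sub_const xT).pow 2).add ((hy.sub_const yT).pow 2)
  have hq0 : (x t - xT) ^ 2 + (y t - yT) ^ 2 ≠ 0 := by rw [← sq_rng]; positivity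
  refine ((hasDerivAt_sqrt hq0).comp t hq).congr_deriv ?_
  simp only [ebx, rng] at hr ⊢
  field_simp
  ring

lemma hasDerivAt_ebx {ω : ℝ} (d : ℝ) (hx : HasDerivAt x (v * cos (θ t)) t)
    (hy : HasDerivAt y (v * sin (θ t)) t) (hθ : HasDerivAt θ ω t) :
    HasDerivAt (ebx x y θ xT yT) (v + ω * (eby x y θ xT yT d t - d)) t := by
  refine (((hx.sub_const xT).mul (hasDerivAt_cos (θ t) |>.comp t hθ)).add
    ((hy.sub_const yT).mul (hasDerivAt_sin (θ t) |>.comp t hθ))).congr_deriv ?_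
  simp only [eby, Function.comp_apply]
  linear_combination v * sin_sq_add_cos_sq (θ t)

lemma hasDerivAt_eby {ω : ℝ} (d : ℝ) (hx : HasDerivAt x (v * cos (θ t)) t)
    (hy : HasDerivAt y (v * sin (θ t)) t) (hθ : HasDerivAt θ ω t) :
    HasDerivAt (eby x y θ xT yT d) (-(ω * ebx x y θ xT yT t)) t := by
  refine ((((hx.sub_const xT).neg.mul (hasDerivAt_sin (θ t) |>.comp t hθ)).add
    ((hy.sub_const yT).mul (hasDerivAt_cos (θ t) |>.comp t hθ))).add_const d).congr_deriv ?_
  simp only [ebx, Pi.neg_apply, Function.comp_apply]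
  ring

end Kinematics

section ClosedLoop

variable {x y θ Ω : ℝ → ℝ} {v d k1 k2 ri ro xT yT : ℝ}

def IsClosedLoopAt (x y θ Ω : ℝ → ℝ) (v d k1 k2 ri ro xT yT t : ℝ) : Prop :=
  HasDerivAt x (v * cos (θ t)) t ∧
  HasDerivAt y (v * sin (θ t)) t ∧
  HasDerivAt θ (v / d + v * k1 * Ω (v * ebx x y θ xT yT t) +
    v * k2 * ((rng x y xT yT t - d) / rng x y xT yT t) *
      eta (d - ri) (ro - d) (rng x y xT yT t - d)) t

noncomputable def lyapunovV₁ (x y θ : ℝ → ℝ) (xT yT d k2 ri ro t : ℝ) : ℝ :=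
  1 / 2 * (ebx x y θ xT yT t ^ 2 + eby x y θ xT yT d t ^ 2) +
    d * k2 * Vr (d - ri) (ro - d) (rng x y xT yT t - d)

lemma hasDerivAt_lyapunovV₁ {t : ℝ} (hd : d ≠ 0) (hri : 0 ≤ ri)
    (hr : rng x y xT yT t ∈ Ioo ri ro)
    (hloop : IsClosedLoopAt x y θ Ω v d k1 k2 ri ro xT yT t) :
    HasDerivAt (lyapunovV₁ x y θ xT yT d k2 ri ro)
      (-(d * k1) * (v * ebx x y θ xT yT t * Ω (v * ebx x y θ xT yT t))) t := by
  obtain ⟨hx, hy, hθ⟩ := hloop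
  have hr0 : rng x y xT yT t ≠ 0 := (hri.trans_lt hr.1).ne'
  have hVr := (hasDerivAt_Vr (δa := d - ri) (δb := ro - d) (by linarith [hr.1])
    (by linarith [hr.2])).comp t ((hasDerivAt_rng hx hy hr0).sub_const d)
  refine ((((hasDerivAt_ebx d hx hy hθ).pow 2).add ((hasDerivAt_eby d hx hy hθ).pow 2)).const_mul
    (1 / 2) |>.add (hVr.const_mul (d * k2))).congr_deriv ?_
  field_simp
  ring

lemma antitoneOn_lyapunovV₁ {a b : ℝ} (hd : 0 < d) (hri : 0 ≤ ri) (hk1 : 0 ≤ k1)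
    (hΩ : ∀ s, 0 ≤ s * Ω s) (hr : ∀ t ∈ Icc a b, rng x y xT yT t ∈ Ioo ri ro)
    (hloop : ∀ t ∈ Icc a b, IsClosedLoopAt x y θ Ω v d k1 k2 ri ro xT yT t) :
    AntitoneOn (lyapunovV₁ x y θ xT yT d k2 ri ro) (Icc a b) := by
  have hV t (ht : t ∈ Icc a b) := hasDerivAt_lyapunovV₁ hd.ne' hri (hr t ht) (hloop t ht)
  refine antitoneOn_of_hasDerivWithinAt_nonpos (convex_Icc a b)
    (fun t ht => (hV t ht).continuousAt.continuousWithinAt)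
    (fun t ht => (hV t (interior_subset ht)).hasDerivWithinAt) fun t _ => ?_
  have := mul_nonneg (mul_nonneg hd.le hk1) (hΩ (v * ebx x y θ xT yT t))
  linarith

lemma rng_mem_Icc_of_lyapunovV₁_le {t W : ℝ} (hd : 0 < d) (hk2 : 0 < k2)
    (hr : rng x y xT yT t ∈ Ioo ri ro) (hri : ri < d) (hro : d < ro)
    (hV : lyapunovV₁ x y θ xT yT d k2 ri ro t ≤ W) :
    rng x y xT yT t ∈ Icc (d - (d - ri) * √(1 - exp (-(2 * W) / (d * k2))))
      (d + (ro - d) * √(1 - exp (-(2 * W) / (d * k2)))) := by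
  have hdk2 : 0 < d * k2 := mul_pos hd hk2
  have hVr : Vr (d - ri) (ro - d) (rng x y xT yT t - d) ≤ W / (d * k2) := by
    rw [le_div_iff₀' hdk2]
    unfold lyapunovV₁ at hV
    nlinarith [sq_nonneg (ebx x y θ xT yT t), sq_nonneg (eby x y θ xT yT d t)]
  have := mem_Icc_of_Vr_le (by linarith) (by linarith)
    ⟨by linarith [hr.1], by linarith [hr.2]⟩ hVr
  rw [show -(2 * (W / (d * k2))) = -(2 * W) / (d * k2) by ring] at this
  constructor <;> linarith [this.1, this.2]

end ClosedLoop

theorem theorem3b_range_bounds_general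
    (x y θ : ℝ → ℝ) (Ω : ℝ → ℝ) (v d k1 k2 ri ro xT yT : ℝ)
    (hΩpos : ∀ s : ℝ, s ≠ 0 → 0 < s * Ω s)
    (hri : 0 < ri) (hrid : ri < d) (hdro : d < ro)
    (hk1 : 0 < k1) (hk2 : 0 < k2)
    (hxdiff : ∀ t ≥ (0 : ℝ), DifferentiableAt ℝ x t)
    (hydiff : ∀ t ≥ (0 : ℝ), DifferentiableAt ℝ y t)
    (hclosedloop : ∀ t ≥ (0 : ℝ), rng x y xT yT t ∈ Set.Ioo ri ro →
      HasDerivAt x (v * Real.cos (θ t)) t ∧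
      HasDerivAt y (v * Real.sin (θ t)) t ∧
      HasDerivAt θ (v / d + v * k1 * Ω (v * ebx x y θ xT yT t) +
        v * k2 * ((rng x y xT yT t - d) / rng x y xT yT t) *
          eta (d - ri) (ro - d) (rng x y xT yT t - d)) t)
    (hr0 : rng x y xT yT 0 ∈ Set.Ioo ri ro)
    (V10 Υ₁ : ℝ)
    (hV10 : V10 = (1 / 2) * ((ebx x y θ xT yT 0) ^ 2 + (eby x y θ xT yT d 0) ^ 2) +
      d * k2 * Vr (d - ri) (ro - d) (rng x y xT yT 0 - d))
    (hΥ₁ : Υ₁ = Real.sqrt (1 - Real.exp (-(2 * V10) / (d * k2)))) :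
    ∀ t ≥ (0 : ℝ),
      (-(d - ri) * Υ₁ ≤ rng x y xT yT t - d ∧ rng x y xT yT t - d ≤ (ro - d) * Υ₁) ∧
      (ri + (d - ri) * (1 - Υ₁) ≤ rng x y xT yT t ∧
        rng x y xT yT t ≤ ro - (ro - d) * (1 - Υ₁)) := by
  have hd : 0 < d := hri.trans hrid
  have hΩ (s : ℝ) : 0 ≤ s * Ω s := by
    rcases eq_or_ne s 0 with rfl | hs
    · rw [zero_mul]
    · exact (hΩpos s hs).le
  have hΥlt : Υ₁ < 1 := by
    rw [hΥ₁, sqrt_lt' one_pos]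
    linarith [exp_pos (-(2 * V10) / (d * k2))]
  have hband : ∀ t ≥ (0 : ℝ), rng x y xT yT t ∈ Icc (d - (d - ri) * Υ₁) (d + (ro - d) * Υ₁) := by
    refine forall_mem_of_forall_Icc_mem isClosed_Icc isOpen_Ioo
      (Icc_subset_Ioo (by nlinarith) (by nlinarith))
      (fun t ht => (continuousAt_rng (hxdiff t ht).continuousAt
        (hydiff t ht).continuousAt).continuousWithinAt) hr0 fun m hm hU => ?_
    have hV := antitoneOn_lyapunovV₁ hd hri.le hk1.le hΩ hU
      fun t ht => hclosedloop t ht.1 (hU t ht)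
    rw [hΥ₁]
    exact rng_mem_Icc_of_lyapunovV₁_le hd hk2 (hU m ⟨hm, le_rfl⟩) hrid hdro
      ((hV ⟨le_rfl, hm⟩ ⟨hm, le_rfl⟩ hm).trans_eq hV10.symm)
  intro t ht
  obtain ⟨hlow, hup⟩ := hband t ht
  exact ⟨⟨by linarith, by linarith⟩, by linarith, by linarith⟩

/-- Theorem 3(b): Under the hypotheses of Theorem 1, with
Υ₁ = √(1 − exp(−2·V₁(0)/(d·k₂))), the radial error and range satisfy
−δ_a·Υ₁ ≤ r(t) − d ≤ δ_b·Υ₁ and r_i + δ_a·(1 − Υ₁) ≤ r(t) ≤ r_o − δ_b·(1 − Υ₁)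
for all t ≥ 0. -/
theorem theorem3b_range_bounds
    (x y θ : ℝ → ℝ) (Ω : ℝ → ℝ) (v d k1 k2 ri ro xT yT : ℝ)
    (hΩcont : Continuous Ω) (hΩ0 : Ω 0 = 0) (hΩpos : ∀ s : ℝ, s ≠ 0 → 0 < s * Ω s)
    (hv : v ≠ 0) (hri : 0 < ri) (hrid : ri < d) (hdro : d < ro)
    (hk1 : 0 < k1) (hk2 : 0 < k2)
    (hxdiff : ∀ t ≥ (0 : ℝ), DifferentiableAt ℝ x t)
    (hydiff : ∀ t ≥ (0 : ℝ), DifferentiableAt ℝ y t)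
    (hθdiff : ∀ t ≥ (0 : ℝ), DifferentiableAt ℝ θ t)
    (hclosedloop : ∀ t ≥ (0 : ℝ), rng x y xT yT t ∈ Set.Ioo ri ro →
      HasDerivAt x (v * Real.cos (θ t)) t ∧
      HasDerivAt y (v * Real.sin (θ t)) t ∧
      HasDerivAt θ (v / d + v * k1 * Ω (v * ebx x y θ xT yT t) +
        v * k2 * ((rng x y xT yT t - d) / rng x y xT yT t) *
          eta (d - ri) (ro - d) (rng x y xT yT t - d)) t)
    (hr0 : rng x y xT yT 0 ∈ Set.Ioo ri ro)
    (V10 Υ₁ : ℝ)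
    (hV10 : V10 = (1 / 2) * ((ebx x y θ xT yT 0) ^ 2 + (eby x y θ xT yT d 0) ^ 2) +
      d * k2 * Vr (d - ri) (ro - d) (rng x y xT yT 0 - d))
    (hΥ₁ : Υ₁ = Real.sqrt (1 - Real.exp (-(2 * V10) / (d * k2)))) :
    ∀ t ≥ (0 : ℝ),
      (-(d - ri) * Υ₁ ≤ rng x y xT yT t - d ∧ rng x y xT yT t - d ≤ (ro - d) * Υ₁) ∧
      (ri + (d - ri) * (1 - Υ₁) ≤ rng x y xT yT t ∧
        rng x y xT yT t ≤ ro - (ro - d) * (1 - Υ₁)) :=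
  theorem3b_range_bounds_general x y θ Ω v d k1 k2 ri ro xT yT hΩpos hri hrid hdro hk1 hk2 hxdiff
    hydiff hclosedloop hr0 V10 Υ₁ hV10 hΥ₁
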